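/- For every s > 2 there exist constants C₁, C₂ > 0 (depending only on s) with the following property: for every real random variable X with Lebesgue density p, E X = 0, Var(X) = 1, E|X|^s < ∞ and ‖p − φ‖_2 ≤ 1, D(X) ≤ C₁·(‖p − φ‖_1 + ‖p − φ‖_2) + C₂·(E|X|^s)^{2/s}·(‖p − φ‖_1 + ‖p − φ‖_2)^{1−2/s}. -/

import Mathlib

/-!
Pointwise, `q log (q / r) ≤ 2 |q - r| + 4 (q - r)² + 2 |log r| |q - r|`, and
`|log φ(x)| = log √(2π) + x² / 2`; integrating, `D(X)` is at most a multiple of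
`‖p - φ‖₁ + ‖p - φ‖₂²` plus `∫ x² |p - φ|`. Hölder's inequality with exponents `s / 2` and
`s / (s - 2)` bounds this integral by `(∫ |x|^s |p - φ|)^(2/s) ‖p - φ‖₁^(1 - 2/s)`, and
`∫ |x|^s |p - φ| ≤ E|X|^s + E|G|^s ≤ (1 + E|G|^s) E|X|^s` because the same Hölder inequality gives
`1 = E X² ≤ (E|X|^s)^(2/s)`. Finally `‖p - φ‖₂² ≤ ‖p - φ‖₂` since `‖p - φ‖₂ ≤ 1`.
-/

open MeasureTheory Real Filter
open scoped ENNReal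

noncomputable section

/-- The standard Gaussian density on `ℝ`. -/
def gauss (x : ℝ) : ℝ := (Real.sqrt (2 * Real.pi))⁻¹ * Real.exp (-x ^ 2 / 2)

/-- The real-valued `L^q(ℝ)` norm. -/
def nrm (f : ℝ → ℝ) (q : ℝ≥0∞) : ℝ := (eLpNorm f q volume).toReal

/-- Kullback–Leibler divergence between densities:  `∫ p_X ln (p_X / p_Y)`. -/
def KLdiv (pX pY : ℝ → ℝ) : ℝ := ∫ x, pX x * Real.log (pX x / pY x)

open ProbabilityTheory

lemma gauss_eq_gaussianPDFReal : gauss = gaussianPDFReal 0 1 := by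
  ext x
  simp [gauss, gaussianPDFReal]

lemma gauss_pos (x : ℝ) : 0 < gauss x := by
  rw [gauss_eq_gaussianPDFReal]; exact gaussianPDFReal_pos 0 1 x one_ne_zero

lemma measurable_gauss : Measurable gauss := by
  rw [gauss_eq_gaussianPDFReal]; exact measurable_gaussianPDFReal 0 1

lemma integrable_gauss : Integrable gauss := by
  rw [gauss_eq_gaussianPDFReal]; exact integrable_gaussianPDFReal 0 1

lemma integrable_mul_gauss_iff {g : ℝ → ℝ} :
    Integrable (fun x => g x * gauss x) ↔ Integrable g (gaussianReal 0 1) := by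
  rw [gaussianReal_of_var_ne_zero 0 one_ne_zero,
    integrable_withDensity_iff (measurable_gaussianPDF 0 1) (.of_forall fun _ => gaussianPDF_lt_top)]
  simp [gauss_eq_gaussianPDFReal]

lemma integrable_abs_rpow_mul_gauss {s : ℝ} (hs : 0 ≤ s) :
    Integrable (fun x => |x| ^ s * gauss x) := by
  rw [integrable_mul_gauss_iff]
  simpa using (memLp_id_gaussianReal (μ := 0) (v := 1) (.mk s hs)).integrable_norm_rpow'

lemma integrable_sq_mul_gauss : Integrable (fun x => x ^ 2 * gauss x) := by
  simpa [sq_abs] using integrable_abs_rpow_mul_gauss zero_le_two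

lemma log_gauss (x : ℝ) : Real.log (gauss x) = -(Real.log (√(2 * π)) + x ^ 2 / 2) := by
  rw [gauss, Real.log_mul (by positivity) (Real.exp_ne_zero _), Real.log_inv, Real.log_exp]
  ring

lemma log_sqrt_two_pi_nonneg : 0 ≤ Real.log (√(2 * π)) :=
  Real.log_nonneg (Real.one_le_sqrt.mpr (by nlinarith [Real.pi_gt_three]))

lemma abs_log_gauss (x : ℝ) : |Real.log (gauss x)| = Real.log (√(2 * π)) + x ^ 2 / 2 := by
  rw [log_gauss, abs_neg, abs_of_nonneg (by positivity [log_sqrt_two_pi_nonneg])]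

lemma mul_log_div_le {q r : ℝ} (hq : 0 ≤ q) (hr : 0 < r) :
    q * Real.log (q / r) ≤ 2 * |q - r| + 4 * (q - r) ^ 2 + 2 * |Real.log r| * |q - r| := by
  rcases le_or_gt q r with hqr | hqr
  · have hlog : Real.log (q / r) ≤ 0 := Real.log_nonpos (by positivity) ((div_le_one hr).mpr hqr)
    have hRHS : 0 ≤ 2 * |q - r| + 4 * (q - r) ^ 2 + 2 * |Real.log r| * |q - r| := by positivity
    nlinarith
  rw [abs_of_pos (sub_pos.mpr hqr)]
  rcases le_or_gt q (2 * r) with hq2 | hq2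
  · -- `log y ≤ y - 1` turns the left side into `q (q - r) / r`, and `q / r ≤ 2`
    have hlog := Real.log_le_sub_one_of_pos (div_pos (hr.trans hqr) hr)
    have : q * (q / r - 1) ≤ 2 * (q - r) := by
      rw [div_sub_one hr.ne', mul_div_assoc', div_le_iff₀ hr]; nlinarith
    nlinarith [mul_le_mul_of_nonneg_left hlog hq, abs_nonneg (Real.log r)]
  · -- here `q ≤ 2 (q - r)`, so `q log q ≤ q² ≤ 4 (q - r)²` and `- q log r ≤ 2 |log r| (q - r)`
    have hq0 : 0 < q := by linarith
    have hlogq : Real.log q ≤ q := (Real.log_le_sub_one_of_pos hq0).trans (by linarith)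
    rw [Real.log_div hq0.ne' hr.ne']
    nlinarith [mul_le_mul_of_nonneg_left hlogq hq, neg_le_abs (Real.log r),
      mul_le_mul_of_nonneg_left (show q ≤ 2 * (q - r) by linarith) (abs_nonneg (Real.log r))]

lemma KLdiv_le_integral {p q G : ℝ → ℝ} (hG : Integrable G) (hG0 : ∀ x, 0 ≤ G x)
    (h : ∀ x, p x * Real.log (p x / q x) ≤ G x) : KLdiv p q ≤ ∫ x, G x := by
  by_cases hI : Integrable (fun x => p x * Real.log (p x / q x))
  · exact integral_mono hI hG h
  · rw [KLdiv, integral_undef hI]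
    exact integral_nonneg hG0

lemma integral_rpow_mul_rpow_le {α : Type*} [MeasurableSpace α] {μ : Measure α} {f g : α → ℝ}
    {θ : ℝ} (hθ₀ : 0 ≤ θ) (hθ₁ : θ ≤ 1) (hf₀ : ∀ x, 0 ≤ f x) (hg₀ : ∀ x, 0 ≤ g x)
    (hf : Integrable f μ) (hg : Integrable g μ) :
    ∫ x, f x ^ θ * g x ^ (1 - θ) ∂μ ≤ (∫ x, f x ∂μ) ^ θ * (∫ x, g x ∂μ) ^ (1 - θ) := by
  have hθ₁' : 0 ≤ 1 - θ := sub_nonneg.mpr hθ₁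
  have hIf : 0 ≤ ∫ x, f x ∂μ := integral_nonneg hf₀
  have hIg : 0 ≤ ∫ x, g x ∂μ := integral_nonneg hg₀
  have hofReal : ∀ x, ENNReal.ofReal (f x ^ θ * g x ^ (1 - θ))
      = ENNReal.ofReal (f x) ^ θ * ENNReal.ofReal (g x) ^ (1 - θ) := fun x => by
    rw [ENNReal.ofReal_mul (by positivity [hf₀ x]), ENNReal.ofReal_rpow_of_nonneg (hf₀ x) hθ₀,
      ENNReal.ofReal_rpow_of_nonneg (hg₀ x) hθ₁']
  have hHolder := ENNReal.lintegral_mul_norm_pow_le hf.aemeasurable.ennreal_ofReal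
    hg.aemeasurable.ennreal_ofReal hθ₀ hθ₁' (add_sub_cancel θ 1)
  rw [← lintegral_congr hofReal, ← ofReal_integral_eq_lintegral_ofReal hf (.of_forall hf₀),
    ← ofReal_integral_eq_lintegral_ofReal hg (.of_forall hg₀),
    ENNReal.ofReal_rpow_of_nonneg hIf hθ₀, ENNReal.ofReal_rpow_of_nonneg hIg hθ₁',
    ← ENNReal.ofReal_mul (by positivity)] at hHolder
  have hmeas : AEMeasurable (fun x => f x ^ θ * g x ^ (1 - θ)) μ :=
    (hf.aemeasurable.pow_const θ).mul (hg.aemeasurable.pow_const (1 - θ))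
  rw [integral_eq_lintegral_of_nonneg_ae (.of_forall fun x => by positivity [hf₀ x, hg₀ x])
    hmeas.aestronglyMeasurable]
  exact ENNReal.toReal_le_of_le_ofReal (by positivity) hHolder

lemma nrm_one_eq_integral_abs {f : ℝ → ℝ} (hf : AEStronglyMeasurable f) :
    nrm f 1 = ∫ x, |f x| := by
  rw [nrm, toReal_eLpNorm hf, lpNorm_one_eq_integral_norm hf]
  rfl

lemma nrm_two_sq {f : ℝ → ℝ} (hf : AEStronglyMeasurable f) : nrm f 2 ^ 2 = ∫ x, f x ^ 2 := by
  rw [nrm, toReal_eLpNorm hf, lpNorm_eq_integral_norm_rpow_toReal two_ne_zero ENNReal.ofNat_ne_top hf]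
  simpa using Real.rpow_inv_natCast_pow (n := 2) (integral_nonneg fun x => sq_nonneg (f x))
    two_ne_zero

section Moments

variable {μ : Measure ℝ} {s : ℝ} {h : ℝ → ℝ}

lemma integral_sq_mul_le (hs : 2 ≤ s) (h₀ : ∀ x, 0 ≤ h x) (hh : Integrable h μ)
    (hsh : Integrable (fun x => |x| ^ s * h x) μ) :
    ∫ x, x ^ 2 * h x ∂μ ≤ (∫ x, |x| ^ s * h x ∂μ) ^ (2 / s) * (∫ x, h x ∂μ) ^ (1 - 2 / s) := by
  have hs₀ : 0 < s := by linarith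
  have hsplit : ∀ x, (|x| ^ s * h x) ^ (2 / s) * h x ^ (1 - 2 / s) = x ^ 2 * h x := fun x => by
    rw [Real.mul_rpow (by positivity) (h₀ x), ← Real.rpow_mul (abs_nonneg x),
      mul_div_cancel₀ 2 hs₀.ne', mul_assoc, ← Real.rpow_add' (h₀ x) (by norm_num),
      add_sub_cancel, Real.rpow_one, Real.rpow_two, sq_abs]
  simp_rw [← hsplit]
  exact integral_rpow_mul_rpow_le (by positivity) ((div_le_one hs₀).mpr hs)
    (fun x => by positivity [h₀ x]) h₀ hsh hh

lemma one_le_integral_abs_rpow_mul (hs : 2 ≤ s) (h₀ : ∀ x, 0 ≤ h x) (hh : Integrable h μ)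
    (hsh : Integrable (fun x => |x| ^ s * h x) μ) (hh₁ : ∫ x, h x ∂μ = 1)
    (hh₂ : ∫ x, x ^ 2 * h x ∂μ = 1) :
    1 ≤ ∫ x, |x| ^ s * h x ∂μ := by
  have hle := integral_sq_mul_le hs h₀ hh hsh
  rw [hh₁, hh₂, Real.one_rpow, mul_one] at hle
  by_contra! hlt
  exact hle.not_gt (Real.rpow_lt_one (integral_nonneg fun x => by positivity [h₀ x]) hlt
    (by positivity))

end Moments

lemma mul_log_div_gauss_le (x : ℝ) {q : ℝ} (hq : 0 ≤ q) :
    q * Real.log (q / gauss x) ≤ (2 + 2 * Real.log (√(2 * π))) * |q - gauss x|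
      + 4 * (q - gauss x) ^ 2 + x ^ 2 * |q - gauss x| := by
  have := mul_log_div_le hq (gauss_pos x)
  rw [abs_log_gauss] at this
  linarith

section DensityNearGauss

variable {p : ℝ → ℝ}

lemma KLdiv_gauss_le (hp₀ : ∀ x, 0 ≤ p x) (hp : Integrable p)
    (hp₂ : Integrable (fun x => x ^ 2 * p x)) (hf : MemLp (fun x => p x - gauss x) 2) :
    KLdiv p gauss ≤ (2 + 2 * Real.log (√(2 * π))) * nrm (fun x => p x - gauss x) 1
      + 4 * nrm (fun x => p x - gauss x) 2 ^ 2 + ∫ x, x ^ 2 * |p x - gauss x| := by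
  have hf₁ : Integrable (fun x => |p x - gauss x|) := (hp.sub integrable_gauss).abs
  have hf₂ : Integrable (fun x => (p x - gauss x) ^ 2) := hf.integrable_sq
  have hx₂ : Integrable (fun x => x ^ 2 * |p x - gauss x|) := by
    refine (hp₂.add integrable_sq_mul_gauss).mono'
      ((continuous_pow 2).aestronglyMeasurable.mul hf₁.1) (.of_forall fun x => ?_)
    rw [Real.norm_eq_abs, abs_of_nonneg (by positivity), Pi.add_apply, ← mul_add]
    gcongr
    exact (abs_sub _ _).trans_eq (by rw [abs_of_nonneg (hp₀ x), abs_of_pos (gauss_pos x)])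
  rw [nrm_one_eq_integral_abs hf.1, nrm_two_sq hf.1, ← integral_const_mul, ← integral_const_mul,
    ← integral_add (hf₁.const_mul _) (hf₂.const_mul _), ← integral_add (by fun_prop) hx₂]
  exact KLdiv_le_integral (by fun_prop) (fun x => by positivity [log_sqrt_two_pi_nonneg])
    (fun x => mul_log_div_gauss_le x (hp₀ x))

lemma integral_sq_mul_abs_sub_gauss_le {s : ℝ} (hs : 2 ≤ s) (hp₀ : ∀ x, 0 ≤ p x)
    (hp : Integrable p) (hps : Integrable (fun x => |x| ^ s * p x))
    (hM : 1 ≤ ∫ x, |x| ^ s * p x) :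
    ∫ x, x ^ 2 * |p x - gauss x|
      ≤ ((1 + ∫ x, |x| ^ s * gauss x) * ∫ x, |x| ^ s * p x) ^ (2 / s)
        * nrm (fun x => p x - gauss x) 1 ^ (1 - 2 / s) := by
  have hgs := integrable_abs_rpow_mul_gauss (by linarith : 0 ≤ s)
  have hf : Integrable (fun x => p x - gauss x) := hp.sub integrable_gauss
  have hf₁ : Integrable (fun x => |p x - gauss x|) := hf.abs
  have habs : ∀ x, |x| ^ s * |p x - gauss x| ≤ |x| ^ s * p x + |x| ^ s * gauss x := fun x => by
    rw [← mul_add]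
    gcongr
    exact (abs_sub _ _).trans_eq (by rw [abs_of_nonneg (hp₀ x), abs_of_pos (gauss_pos x)])
  have hfs : Integrable (fun x => |x| ^ s * |p x - gauss x|) :=
    (hps.add hgs).mono' ((measurable_abs.pow_const s).aestronglyMeasurable.mul hf₁.1)
      (.of_forall fun x => by rw [Real.norm_eq_abs, abs_of_nonneg (by positivity)]; exact habs x)
  have hmoment : ∫ x, |x| ^ s * |p x - gauss x|
      ≤ (1 + ∫ x, |x| ^ s * gauss x) * ∫ x, |x| ^ s * p x := by
    have hgs₀ : 0 ≤ ∫ x, |x| ^ s * gauss x := integral_nonneg fun x => by positivity [gauss_pos x]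
    calc ∫ x, |x| ^ s * |p x - gauss x|
        ≤ ∫ x, (|x| ^ s * p x + |x| ^ s * gauss x) := integral_mono hfs (hps.add hgs) habs
      _ = (∫ x, |x| ^ s * p x) + ∫ x, |x| ^ s * gauss x := integral_add hps hgs
      _ ≤ _ := by nlinarith
  calc ∫ x, x ^ 2 * |p x - gauss x|
      ≤ (∫ x, |x| ^ s * |p x - gauss x|) ^ (2 / s) * (∫ x, |p x - gauss x|) ^ (1 - 2 / s) :=
        integral_sq_mul_le hs (fun x => abs_nonneg _) hf₁ hfs
    _ ≤ _ := by
      rw [nrm_one_eq_integral_abs hf.1]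
      gcongr

end DensityNearGauss

/-- **Corollary 2.4.** For every `s > 2` there are constants `C₁, C₂ > 0` such that for any
random variable `X` with density `p`, `E X = 0`, `Var X = 1`, `E|X|^s < ∞` and `‖p−φ‖₂ ≤ 1`,
`D(X) ≤ C₁ (‖p−φ‖₁ + ‖p−φ‖₂) + C₂ (E|X|^s)^{2/s} (‖p−φ‖₁ + ‖p−φ‖₂)^{1−2/s}`. -/
theorem D_upper_bound_L1_L2 :
    ∀ s : ℝ, 2 < s →
      ∃ C₁ C₂ : ℝ, 0 < C₁ ∧ 0 < C₂ ∧
        ∀ p : ℝ → ℝ, Measurable p → (∀ x, 0 ≤ p x) → (∫ x, p x) = 1 →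
          Integrable (fun x => x * p x) → (∫ x, x * p x) = 0 →
          Integrable (fun x => x ^ 2 * p x) → (∫ x, x ^ 2 * p x) = 1 →
          Integrable (fun x => |x| ^ s * p x) →
          eLpNorm (fun x => p x - gauss x) 2 volume ≤ 1 →
            KLdiv p gauss ≤
              C₁ * (nrm (fun x => p x - gauss x) 1 + nrm (fun x => p x - gauss x) 2)
              + C₂ * (∫ x, |x| ^ s * p x) ^ (2 / s) *
                  (nrm (fun x => p x - gauss x) 1 + nrm (fun x => p x - gauss x) 2) ^ (1 - 2 / s) := by
  intro s hs
  set c := Real.log (√(2 * π))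
  set m := ∫ x, |x| ^ s * gauss x
  have hm : 0 ≤ m := integral_nonneg fun x => by positivity [gauss_pos x]
  refine ⟨6 + 2 * c, (1 + m) ^ (2 / s), by positivity [log_sqrt_two_pi_nonneg], by positivity,
    fun p hp_meas hp₀ hp₁ _ _ hp₂ hvar hps hL2 => ?_⟩
  have hp : Integrable p := .of_integral_ne_zero (by simp [hp₁])
  have hf : MemLp (fun x => p x - gauss x) 2 :=
    ⟨(hp_meas.sub measurable_gauss).aestronglyMeasurable, hL2.trans_lt ENNReal.one_lt_top⟩
  set N₁ := nrm (fun x => p x - gauss x) 1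
  set N₂ := nrm (fun x => p x - gauss x) 2
  set M := ∫ x, |x| ^ s * p x
  have hN₁ : 0 ≤ N₁ := ENNReal.toReal_nonneg
  have hN₂ : 0 ≤ N₂ := ENNReal.toReal_nonneg
  have hN₂_le : N₂ ≤ 1 := ENNReal.toReal_le_of_le_ofReal zero_le_one (by simpa using hL2)
  have hM : 1 ≤ M := one_le_integral_abs_rpow_mul hs.le hp₀ hp hps hp₁ hvar
  calc KLdiv p gauss
      ≤ (2 + 2 * c) * N₁ + 4 * N₂ ^ 2 + ∫ x, x ^ 2 * |p x - gauss x| :=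
        KLdiv_gauss_le hp₀ hp hp₂ hf
    _ ≤ (2 + 2 * c) * N₁ + 4 * N₂ + ((1 + m) * M) ^ (2 / s) * N₁ ^ (1 - 2 / s) := by
        gcongr
        · nlinarith
        · exact integral_sq_mul_abs_sub_gauss_le hs.le hp₀ hp hps hM
    _ ≤ (6 + 2 * c) * (N₁ + N₂) + (1 + m) ^ (2 / s) * M ^ (2 / s) * (N₁ + N₂) ^ (1 - 2 / s) := by
        rw [Real.mul_rpow (by positivity) (by positivity)]
        have hexp : 0 ≤ 1 - 2 / s := by rw [sub_nonneg, div_le_one (by linarith)]; exact hs.le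
        gcongr
        · nlinarith [log_sqrt_two_pi_nonneg]
        · linarith
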